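/- arXiv:2603.22226 — 7 statements merged into one kernel-verified Lean document; each statement's English description precedes it below -/
import Mathlib

section
/- Let n ≥ 2 and let a_1 ≤ a_2 ≤ … ≤ a_n and b_1 ≤ b_2 ≤ … ≤ b_n be positive integers. Assume that ∏_{j=1}^n (1−q^{b_j}) divides ∏_{i=1}^n (1−q^{a_i}) in ℤ[q], and that 2·b_n·⌊b_{n−1}/2⌋ − b_1 < a_1. Then for every subset I ⊆ {1,…,n}, the number of indices i ∈ {1,…,n} (counted with multiplicity) such that a_i ∈ ⟨{b_j : j ∈ I}⟩ is at least #I. -/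
open scoped Classical

open Polynomial Finset

/-! Let `g` be the gcd of `{b_j : j ∈ I}`. A primitive `g`-th root of unity is a root of
`1 - q^m` exactly when `g ∣ m`, and then a simple one; comparing its multiplicities in the two
products gives `#I ≤ #{j | g ∣ b_j} ≤ #{i | g ∣ a_i}`. Every such `a_i` lies in `⟨b_j : j ∈ I⟩`:
adding the generators one at a time shows that a numerical semigroup with generators at most `M`,
one of them `c`, and gcd `g` contains every multiple of `g` exceeding `M (c/g - 1) - c`, and the
hypothesis on `a_1` puts all `a_i` beyond this bound. -/

namespace Polynomial

variable {K : Type*} [Field K] [CharZero K]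

theorem one_sub_X_pow_ne_zero {R : Type*} [CommRing R] [Nontrivial R] {m : ℕ} (hm : m ≠ 0) :
    (1 - X ^ m : R[X]) ≠ 0 := by
  intro h
  simpa [zero_pow hm] using congrArg (eval 0) h

theorem count_roots_one_sub_X_pow {ζ : K} {d m : ℕ} (hζ : IsPrimitiveRoot ζ d) (hm : m ≠ 0) :
    (1 - X ^ m : K[X]).roots.count ζ = if d ∣ m then 1 else 0 := by
  have hneg : (1 - X ^ m : K[X]) = -(X ^ m - C 1) := by simp
  have hsep : (X ^ m - C 1 : K[X]).Separable :=
    separable_X_pow_sub_C 1 (Nat.cast_ne_zero.mpr hm) one_ne_zero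
  rw [hneg, roots_neg, Multiset.count_eq_of_nodup (nodup_roots hsep), ← nthRoots]
  simp only [mem_nthRoots (Nat.pos_of_ne_zero hm), hζ.pow_eq_one_iff_dvd]

theorem count_roots_prod_one_sub_X_pow {ι : Type*} {ζ : K} {d : ℕ} (hζ : IsPrimitiveRoot ζ d)
    (s : Finset ι) {f : ι → ℕ} (hf : ∀ i ∈ s, 0 < f i) :
    (∏ i ∈ s, (1 - X ^ f i : K[X])).roots.count ζ = #{i ∈ s | d ∣ f i} := by
  rw [roots_prod _ _ (prod_ne_zero_iff.mpr fun i hi ↦ one_sub_X_pow_ne_zero (hf i hi).ne'),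
    Multiset.count_bind, card_filter]
  exact sum_congr rfl fun i hi ↦ count_roots_one_sub_X_pow hζ (hf i hi).ne'

theorem card_filter_dvd_le_of_prod_one_sub_X_pow_dvd {ι κ : Type*} {s : Finset ι} {t : Finset κ}
    {a : ι → ℕ} {b : κ → ℕ} (ha : ∀ i ∈ s, 0 < a i) (hb : ∀ j ∈ t, 0 < b j)
    (h : (∏ j ∈ t, (1 - X ^ b j : ℤ[X])) ∣ ∏ i ∈ s, (1 - X ^ a i)) {d : ℕ} (hd : d ≠ 0) :
    #{j ∈ t | d ∣ b j} ≤ #{i ∈ s | d ∣ a i} := by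
  obtain ⟨ζ, hζ⟩ : ∃ ζ : ℂ, IsPrimitiveRoot ζ d := ⟨_, Complex.isPrimitiveRoot_exp d hd⟩
  have hC := map_dvd (Int.castRingHom ℂ) h
  simp only [Polynomial.map_prod, Polynomial.map_sub, Polynomial.map_one, Polynomial.map_pow,
    map_X] at hC
  rw [← count_roots_prod_one_sub_X_pow hζ s ha, ← count_roots_prod_one_sub_X_pow hζ t hb]
  exact Multiset.count_le_of_le _ (roots.le_of_dvd
    (prod_ne_zero_iff.mpr fun i hi ↦ one_sub_X_pow_ne_zero (ha i hi).ne') hC)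

end Polynomial

-- Bézout gives `gcd e g = e A + g B`; `y` is `A m / gcd e g` reduced modulo `g / gcd e g`.
theorem Nat.exists_lt_div_gcd_dvd_sub_mul {e g : ℕ} (hg : 0 < g) {m : ℤ}
    (hm : (Nat.gcd e g : ℤ) ∣ m) : ∃ y < g / Nat.gcd e g, (g : ℤ) ∣ m - y * e := by
  set v := g / Nat.gcd e g
  have hv : g = Nat.gcd e g * v := (Nat.mul_div_cancel' (Nat.gcd_dvd_right e g)).symm
  have hv0 : (0 : ℤ) < v := by
    exact_mod_cast Nat.div_pos (Nat.gcd_le_right _ hg) (Nat.gcd_pos_of_pos_right _ hg)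
  obtain ⟨e₁, he₁⟩ := Nat.gcd_dvd_left e g
  obtain ⟨k, rfl⟩ := hm
  set y₀ := k * Nat.gcdA e g
  refine ⟨(y₀ % v).toNat,
    (Int.toNat_lt (Int.emod_nonneg _ hv0.ne')).mpr (Int.emod_lt_of_pos _ hv0), ?_⟩
  rw [Int.toNat_of_nonneg (Int.emod_nonneg _ hv0.ne'), Int.emod_def]
  refine ⟨k * Nat.gcdB e g + y₀ / v * e₁, ?_⟩
  have hbez := Nat.gcd_eq_gcd_ab e g
  have he : (e : ℤ) = Nat.gcd e g * e₁ := by exact_mod_cast he₁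
  have hg' : (g : ℤ) = Nat.gcd e g * v := by exact_mod_cast hv
  linear_combination k * hbez + y₀ / v * v * he - y₀ / v * e₁ * hg'

theorem Nat.mul_sub_one_add_mul_le {M u v y e : ℕ} (hu : 0 < u) (hy : y < v) (he : e ≤ M) :
    M * (u - 1) + y * e ≤ M * (u * v - 1) := by
  obtain ⟨u, rfl⟩ := Nat.exists_add_one_eq.mpr hu
  obtain ⟨v, rfl⟩ := Nat.exists_add_one_eq.mpr (Nat.zero_lt_of_lt hy)
  have hye : y * e ≤ v * M := Nat.mul_le_mul (by omega) he
  rw [Nat.add_sub_cancel, show (u + 1) * (v + 1) - 1 = u * v + u + v by ring_nf; omega]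
  nlinarith [Nat.zero_le (M * u * v)]

/- Stated in `ℤ` because the induction hypothesis is applied to `m - y e`, which is only known
to be nonnegative once it is shown to lie in the semigroup. -/
theorem exists_mem_closure_insert_eq_of_gcd_dvd (T : Finset ℕ) {c M : ℕ} (hc : 0 < c)
    (hM : ∀ x ∈ insert c T, x ≤ M) {m : ℤ} (hdvd : (((insert c T).gcd id : ℕ) : ℤ) ∣ m)
    (hm : (M * (c / (insert c T).gcd id - 1) : ℕ) < m + c) :
    ∃ k ∈ AddSubmonoid.closure (insert c T : Set ℕ), (k : ℤ) = m := by
  induction T using Finset.induction_on generalizing m with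
  | empty =>
    simp only [insert_empty_eq, gcd_singleton, id, normalize_eq, Nat.div_self hc, Nat.sub_self,
      mul_zero, Nat.cast_zero] at hdvd hm
    obtain ⟨t, rfl⟩ := hdvd
    have ht : 0 ≤ t := by nlinarith
    refine ⟨t.toNat • c, ?_, by simp [ht, mul_comm]⟩
    exact AddSubmonoid.nsmul_mem _ (AddSubmonoid.subset_closure (by simp)) _
  | insert e T _ ih =>
    rw [insert_comm] at hM hdvd hm
    set g := (insert c T).gcd id
    rw [gcd_insert, show GCDMonoid.gcd (id e) g = Nat.gcd e g from rfl] at hdvd hm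
    have hgc : g ∣ c := gcd_dvd (f := id) (mem_insert_self c T)
    have hg : 0 < g := Nat.pos_of_dvd_of_pos hgc hc
    obtain ⟨y, hy, hdvd'⟩ := Nat.exists_lt_div_gcd_dvd_sub_mul (e := e) hg hdvd
    have hbound : M * (c / g - 1) + y * e ≤ M * (c / Nat.gcd e g - 1) := by
      rw [← Nat.div_mul_div hgc (Nat.gcd_dvd_right e g)]
      exact Nat.mul_sub_one_add_mul_le (Nat.div_pos (Nat.le_of_dvd hc hgc) hg) hy
        (hM e (mem_insert_self e _))
    obtain ⟨k, hk, hkm⟩ := ih (fun x hx ↦ hM x (mem_insert_of_mem hx)) hdvd' (by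
      have h := (Nat.cast_le (α := ℤ)).mpr hbound
      rw [Nat.cast_add, Nat.cast_mul y e] at h
      linarith)
    have hT : insert c (T : Set ℕ) ⊆ insert c ((insert e T : Finset ℕ) : Set ℕ) := by
      rw [coe_insert]
      exact Set.insert_subset_insert (Set.subset_insert _ _)
    refine ⟨k + y • e, add_mem (AddSubmonoid.closure_mono hT hk)
      (nsmul_mem (AddSubmonoid.subset_closure (by simp)) _), ?_⟩
    rw [smul_eq_mul]
    push_cast
    linarith

theorem mem_closure_of_gcd_dvd_of_mul_lt {S : Finset ℕ} {c M m : ℕ} (hcS : c ∈ S) (hc : 0 < c)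
    (hM : ∀ x ∈ S, x ≤ M) (hdvd : S.gcd id ∣ m) (hm : M * (c / S.gcd id - 1) < m + c) :
    m ∈ AddSubmonoid.closure (S : Set ℕ) := by
  rw [← insert_erase hcS] at hM hdvd hm ⊢
  obtain ⟨k, hk, hkm⟩ := exists_mem_closure_insert_eq_of_gcd_dvd _ hc hM (m := m)
    (by exact_mod_cast hdvd) (by exact_mod_cast hm)
  rwa [coe_insert, ← Nat.cast_inj.mp hkm]

theorem Nat.div_sub_one_le_two_mul_div_two {c B : ℕ} (g : ℕ) (h : c ≤ B) :
    c / g - 1 ≤ 2 * (B / 2) := by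
  rcases Nat.lt_or_ge g 2 with hg | hg
  · interval_cases g <;> omega
  · have := Nat.div_le_div_left hg two_pos (a := c)
    have := Nat.div_le_div_right h (c := 2)
    omega

theorem Finset.exists_mem_lt_or_eq_singleton {α : Type*} [LinearOrder α] {I : Finset α} {n : α}
    (hI : ∀ j ∈ I, j ≤ n) (hne : I.Nonempty) : ∃ j ∈ I, j < n ∨ I = {j} := by
  obtain ⟨j, rfl⟩ | hnt := hne.exists_eq_singleton_or_nontrivial
  · exact ⟨j, mem_singleton_self j, Or.inr rfl⟩
  · obtain ⟨j, hj, hjn⟩ := hnt.exists_ne n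
    exact ⟨j, hj, Or.inl ((hI j hj).lt_of_ne hjn)⟩

theorem monotoneOn_Icc_of_le_add_one {α : Type*} [Preorder α] {f : ℕ → α} {m n : ℕ}
    (h : ∀ i, m ≤ i → i < n → f i ≤ f (i + 1)) : MonotoneOn f (Set.Icc m n) :=
  monotoneOn_of_le_add_one Set.ordConnected_Icc fun i _ hi hi1 ↦ h i hi.1 (by simp at hi1; omega)

theorem mem_closure_image_of_gcd_dvd {n : ℕ} {a b : ℕ → ℕ} {I : Finset ℕ} (hI : I ⊆ Icc 1 n)
    (hne : I.Nonempty) (hb_pos : ∀ i ∈ Icc 1 n, 0 < b i) (hb : MonotoneOn b (Set.Icc 1 n))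
    (hfrob : 2 * b n * (b (n - 1) / 2) < a 1 + b 1) {i : ℕ} (ha : a 1 ≤ a i)
    (hdvd : I.gcd b ∣ a i) :
    a i ∈ AddSubmonoid.closure ((I.image b : Finset ℕ) : Set ℕ) := by
  have hIcc : ∀ j ∈ I, j ∈ Set.Icc 1 n := fun j hj ↦ by simpa using hI hj
  have hle : ∀ j ∈ I, b j ≤ b n := fun j hj ↦
    hb (hIcc j hj) ⟨(hIcc j hj).1.trans (hIcc j hj).2, le_rfl⟩ (hIcc j hj).2
  obtain ⟨j, hjI, hj⟩ := exists_mem_lt_or_eq_singleton (fun j hj ↦ (hIcc j hj).2) hne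
  obtain ⟨hj1, hjn⟩ := hIcc j hjI
  have hb1 : b 1 ≤ b j := hb ⟨le_rfl, hj1.trans hjn⟩ ⟨hj1, hjn⟩ hj1
  have hquot : b j / I.gcd b - 1 ≤ 2 * (b (n - 1) / 2) := by
    rcases hj with hj | rfl
    · exact Nat.div_sub_one_le_two_mul_div_two _
        (hb ⟨hj1, hjn⟩ ⟨hj1.trans (by omega), by omega⟩ (by omega))
    · simp [Nat.div_self (hb_pos j (hI hjI))]
  refine mem_closure_of_gcd_dvd_of_mul_lt (M := b n) (mem_image_of_mem b hjI) (hb_pos j (hI hjI))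
    (by simpa using hle) (by rwa [gcd_image]) ?_
  rw [gcd_image, Function.id_comp]
  calc b n * (b j / I.gcd b - 1) ≤ 2 * b n * (b (n - 1) / 2) := by
        rw [mul_assoc, mul_left_comm]; exact Nat.mul_le_mul_left _ hquot
    _ < a i + b j := by omega

theorem stmt_0_general (n : ℕ) (a b : ℕ → ℕ)
    (ha_pos : ∀ i ∈ Finset.Icc 1 n, 0 < a i)
    (hb_pos : ∀ i ∈ Finset.Icc 1 n, 0 < b i)
    (ha_mono : ∀ i, 1 ≤ i → i < n → a i ≤ a (i + 1))
    (hb_mono : ∀ i, 1 ≤ i → i < n → b i ≤ b (i + 1))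
    (hdvd : (∏ j ∈ Finset.Icc 1 n, (1 - X ^ (b j)) : ℤ[X]) ∣
      ∏ i ∈ Finset.Icc 1 n, (1 - X ^ (a i)))
    (hfrob : ((2 * b n * (b (n - 1) / 2) : ℕ) : ℤ) - (b 1 : ℤ) < (a 1 : ℤ)) :
    ∀ I ⊆ Finset.Icc 1 n,
      I.card ≤ ((Finset.Icc 1 n).filter
        (fun i => a i ∈ AddSubmonoid.closure ((I.image b : Finset ℕ) : Set ℕ))).card := by
  intro I hI
  obtain rfl | hne := I.eq_empty_or_nonempty
  · simp
  have hg : I.gcd b ≠ 0 := by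
    obtain ⟨j, hj⟩ := hne
    exact fun h ↦ (hb_pos j (hI hj)).ne' (Nat.eq_zero_of_zero_dvd (h ▸ gcd_dvd hj))
  have ha := monotoneOn_Icc_of_le_add_one ha_mono
  calc #I ≤ #{j ∈ Icc 1 n | I.gcd b ∣ b j} :=
        card_le_card fun j hj ↦ mem_filter.mpr ⟨hI hj, gcd_dvd hj⟩
    _ ≤ #{i ∈ Icc 1 n | I.gcd b ∣ a i} :=
        Polynomial.card_filter_dvd_le_of_prod_one_sub_X_pow_dvd ha_pos hb_pos hdvd hg
    _ ≤ _ := by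
        refine card_le_card (monotone_filter_right _ fun i hi hgi ↦ ?_)
        have hi' := mem_Icc.mp hi
        exact mem_closure_image_of_gcd_dvd hI hne hb_pos (monotoneOn_Icc_of_le_add_one hb_mono)
          (by omega) (ha ⟨le_rfl, hi'.1.trans hi'.2⟩ hi' hi'.1) hgi

/-- **Theorem 3.8 (main theorem), combinatorial conclusion.**
Let `n ≥ 2` and `a_1 ≤ … ≤ a_n`, `b_1 ≤ … ≤ b_n` be positive integers such that
`∏ (1 - q^{b_j})` divides `∏ (1 - q^{a_i})` in `ℤ[q]` and
`2 b_n ⌊b_{n-1}/2⌋ - b_1 < a_1`. Then for every `I ⊆ {1,…,n}`, the number of indices `i`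
with `a_i` in the numerical semigroup generated by `{b_j : j ∈ I}` is at least `#I`. -/
theorem stmt_0 (n : ℕ) (hn : 2 ≤ n) (a b : ℕ → ℕ)
    (ha_pos : ∀ i ∈ Finset.Icc 1 n, 0 < a i)
    (hb_pos : ∀ i ∈ Finset.Icc 1 n, 0 < b i)
    (ha_mono : ∀ i, 1 ≤ i → i < n → a i ≤ a (i + 1))
    (hb_mono : ∀ i, 1 ≤ i → i < n → b i ≤ b (i + 1))
    (hdvd : (∏ j ∈ Finset.Icc 1 n, (1 - X ^ (b j)) : ℤ[X]) ∣
      ∏ i ∈ Finset.Icc 1 n, (1 - X ^ (a i)))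
    (hfrob : ((2 * b n * (b (n - 1) / 2) : ℕ) : ℤ) - (b 1 : ℤ) < (a 1 : ℤ)) :
    ∀ I ⊆ Finset.Icc 1 n,
      I.card ≤ ((Finset.Icc 1 n).filter
        (fun i => a i ∈ AddSubmonoid.closure ((I.image b : Finset ℕ) : Set ℕ))).card :=
  stmt_0_general n a b ha_pos hb_pos ha_mono hb_mono hdvd hfrob
end

section
/- Let a_1,…,a_n and b_1,…,b_n be positive integers, and consider the polynomial ring ℂ[x_1,…,x_n] graded by assigning deg(x_i) = b_i. If there exists a regular sequence f_1,…,f_n in ℂ[x_1,…,x_n] consisting of nonzero weighted-homogeneous polynomials with deg(f_i) = a_i, then for every subset I ⊆ {1,…,n}, the number of indices i ∈ {1,…,n} (counted with multiplicity) such that a_i ∈ ⟨{b_j : j ∈ I}⟩ is at least #I. -/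
/-!
A regular sequence of length `n` generates an ideal of height at least `n`: modulo the ideal of
its first `k` terms, the next term is a non-zero-divisor, so it avoids every minimal prime of that
ideal and raises the height by one. On the other hand, a monomial of weight outside the semigroup
`⟨b_j : j ∈ I⟩` must involve some `x_j` with `j ∉ I`, so every `f_i` whose degree lies outside
the semigroup is in `(x_j : j ∉ I)`. Hence `(f_1, …, f_n)` is contained in the ideal generated by
the `f_i` with `a_i ∈ ⟨b_j : j ∈ I⟩` together with the `x_j`, `j ∉ I`. This ideal is proper (all
generators have positive degree), so by Krull's height theorem its height is at most its number
of generators, `#{i | a_i ∈ ⟨b_j : j ∈ I⟩} + n - #I`, which must therefore be at least `n`.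
-/

open scoped Classical

/-- A regular sequence of maximal length on `ℂ[x_1,…,x_n]` (graded with `deg xᵢ = bᵢ`)
consisting of nonzero weighted-homogeneous polynomials: each `f i` is a non-zero-divisor
modulo the ideal generated by the previous ones, and the ideal generated by all of them
is proper. -/
def IsHomRegularSeq {n m : ℕ} (b : Fin n → ℕ) (a : Fin m → ℕ)
    (f : Fin m → MvPolynomial (Fin n) ℂ) : Prop :=
  (∀ i, f i ≠ 0) ∧
  (∀ i, MvPolynomial.IsWeightedHomogeneous b (f i) (a i)) ∧
  (∀ i : Fin m,
    Ideal.Quotient.mk (Ideal.span (f '' {j | j < i})) (f i) ∈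
      nonZeroDivisors (MvPolynomial (Fin n) ℂ ⧸ Ideal.span (f '' {j | j < i}))) ∧
  Ideal.span (Set.range f) ≠ ⊤

namespace Ideal

variable {R : Type*} [CommRing R]

theorem height_add_one_le_height_sup_span_singleton (I : Ideal R) {x : R}
    (hx : Ideal.Quotient.mk I x ∈ nonZeroDivisors (R ⧸ I)) :
    I.height + 1 ≤ (I ⊔ span {x}).height := by
  have hreg : IsSMulRegular (R ⧸ I) x := by
    refine IsSMulRegular.of_right_eq_zero_of_smul fun y hy => ?_
    exact (mem_nonZeroDivisors_iff.mp hx).1 y (by simpa [Algebra.smul_def, mul_comm] using hy)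
  rw [height_eq_inf_minimalPrimes (I ⊔ span {x})]
  refine le_iInf₂ fun P hP => ?_
  have := hP.isPrime
  obtain ⟨Q, hQ, hQP⟩ := exists_minimalPrimes_le (le_sup_left.trans hP.1.2)
  have := hQ.isPrime
  have hxQ : x ∉ Q := hreg.notMem_of_mem_minimalPrimes (by rwa [annihilator_quotient])
  have hxP : x ∈ P := hP.1.2 (mem_sup_right (mem_span_singleton_self x))
  calc I.height + 1 ≤ Q.height + 1 := add_le_add_left (height_mono hQ.1.2) 1
    _ ≤ P.height := height_add_one_le_of_lt_of_isPrime (lt_of_le_of_ne hQP fun h => hxQ (h ▸ hxP))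

theorem le_height_span_range_of_isRegular {m : ℕ} (f : Fin m → R)
    (hf : ∀ i : Fin m, Ideal.Quotient.mk (span (f '' {j | j < i})) (f i) ∈
      nonZeroDivisors (R ⧸ span (f '' {j | j < i}))) :
    (m : ℕ∞) ≤ (span (Set.range f)).height := by
  suffices h : ∀ k ≤ m, (k : ℕ∞) ≤ (span (f '' {j | (j : ℕ) < k})).height by
    simpa [Set.image_univ] using h m le_rfl
  intro k
  induction k with
  | zero => simp
  | succ k ih =>
    intro hk
    have hsucc : {j : Fin m | (j : ℕ) < k + 1} = insert ⟨k, hk⟩ {j | j < ⟨k, hk⟩} := by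
      ext j
      simp only [Set.mem_ofPred_eq, Set.mem_insert_iff, Fin.ext_iff, Fin.lt_def]
      omega
    rw [hsucc, Set.image_insert_eq, span_insert, sup_comm, Nat.cast_succ]
    exact (add_le_add_left (ih (by omega)) 1).trans
      (height_add_one_le_height_sup_span_singleton _ (hf ⟨k, hk⟩))

theorem height_span_finset_le_card [IsNoetherianRing R] (s : Finset R)
    (hs : span (s : Set R) ≠ ⊤) : (span (s : Set R)).height ≤ s.card :=
  ((span (s : Set R)).height_le_spanFinrank hs).trans <| by
    exact_mod_cast (Submodule.spanFinrank_span_le_ncard_of_finite s.finite_toSet).trans (by simp)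

end Ideal

namespace MvPolynomial

variable {σ R M : Type*} [CommSemiring R] [AddCommMonoid M] {w : σ → M}

theorem IsWeightedHomogeneous.mem_span_X_image_compl {p : MvPolynomial σ R} {d : M}
    (hp : p.IsWeightedHomogeneous w d) {s : Set σ} (hd : d ∉ AddSubmonoid.closure (w '' s)) :
    p ∈ Ideal.span (X '' sᶜ : Set (MvPolynomial σ R)) := by
  refine mem_ideal_span_X_image.mpr fun m hm => ?_
  by_contra! hms
  rw [← hp (mem_support_iff.mp hm), Finsupp.weight_apply, Finsupp.sum] at hd
  refine hd (AddSubmonoid.sum_mem _ fun i hi => nsmul_mem (AddSubmonoid.subset_closure ?_) _)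
  exact ⟨i, not_not.mp fun h => Finsupp.mem_support_iff.mp hi (hms i h), rfl⟩

theorem span_range_le_span_image_union_X_image {ι : Type*} {f : ι → MvPolynomial σ R}
    {a : ι → M} (hf : ∀ i, (f i).IsWeightedHomogeneous w (a i)) (s : Set σ) :
    Ideal.span (Set.range f) ≤
      Ideal.span (f '' {i | a i ∈ AddSubmonoid.closure (w '' s)} ∪ X '' sᶜ) := by
  refine Ideal.span_le.mpr ?_
  rintro _ ⟨i, rfl⟩
  by_cases hi : a i ∈ AddSubmonoid.closure (w '' s)
  · exact Ideal.subset_span (Or.inl ⟨i, hi, rfl⟩)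
  · exact Ideal.span_mono Set.subset_union_right ((hf i).mem_span_X_image_compl hi)

theorem IsWeightedHomogeneous.constantCoeff_eq_zero {p : MvPolynomial σ R} {d : M}
    (hp : p.IsWeightedHomogeneous w d) (hd : d ≠ 0) : constantCoeff p = 0 :=
  hp.coeff_eq_zero 0 (by simpa using hd.symm)

end MvPolynomial

theorem stmt_2_general (n : ℕ) (a b : Fin n → ℕ) (ha : ∀ i, 0 < a i)
    (hreg : ∃ f : Fin n → MvPolynomial (Fin n) ℂ, IsHomRegularSeq b a f) :
    ∀ I : Finset (Fin n),
      I.card ≤ (Finset.univ.filter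
        (fun i => a i ∈ AddSubmonoid.closure ((I.image b : Finset ℕ) : Set ℕ))).card := by
  intro I
  obtain ⟨f, -, hhom, hf, -⟩ := hreg
  set T := Finset.univ.filter
    (fun i => a i ∈ AddSubmonoid.closure ((I.image b : Finset ℕ) : Set ℕ))
  set gens : Finset (MvPolynomial (Fin n) ℂ) := T.image f ∪ Iᶜ.image MvPolynomial.X
  have hgens : (gens : Set (MvPolynomial (Fin n) ℂ)) =
      f '' {i | a i ∈ AddSubmonoid.closure (b '' I)} ∪ MvPolynomial.X '' (I : Set (Fin n))ᶜ := by
    simp [gens, T]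
  have hproper : Ideal.span (gens : Set (MvPolynomial (Fin n) ℂ)) ≠ ⊤ := by
    refine ne_top_of_le_ne_top (RingHom.ker_ne_top MvPolynomial.constantCoeff)
      (Ideal.span_le.mpr ?_)
    simp only [gens, Finset.coe_union, Finset.coe_image, Set.union_subset_iff,
      Set.image_subset_iff]
    exact ⟨fun i _ => (hhom i).constantCoeff_eq_zero (ha i).ne',
      fun j _ => MvPolynomial.constantCoeff_X ℂ j⟩
  have hheight : (n : ℕ∞) ≤ gens.card :=
    calc (n : ℕ∞) ≤ (Ideal.span (Set.range f)).height :=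
          Ideal.le_height_span_range_of_isRegular f hf
      _ ≤ (Ideal.span (gens : Set _)).height :=
        Ideal.height_mono (hgens ▸ MvPolynomial.span_range_le_span_image_union_X_image hhom I)
      _ ≤ gens.card := Ideal.height_span_finset_le_card gens hproper
  have hcard : gens.card ≤ T.card + (n - I.card) :=
    (Finset.card_union_le _ _).trans (add_le_add Finset.card_image_le
      (Finset.card_image_le.trans (by rw [Finset.card_compl, Fintype.card_fin])))
  have hn : n ≤ gens.card := by exact_mod_cast hheight
  have hI : I.card ≤ n := by simpa using I.card_le_univ
  omega

/-- **Proposition 3.4, direction 1 ⟹ 2.** If there is a regular sequence of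
weighted-homogeneous elements `f_1,…,f_n` with `deg fᵢ = aᵢ` in `ℂ[x_1,…,x_n]`
with `deg xᵢ = bᵢ`, then for every subset of indices `I`, the number of `i` with
`aᵢ` in the numerical semigroup generated by `{b_j : j ∈ I}` is at least `#I`. -/
theorem stmt_2 (n : ℕ) (a b : Fin n → ℕ) (ha : ∀ i, 0 < a i) (hb : ∀ i, 0 < b i)
    (hreg : ∃ f : Fin n → MvPolynomial (Fin n) ℂ, IsHomRegularSeq b a f) :
    ∀ I : Finset (Fin n),
      I.card ≤ (Finset.univ.filter
        (fun i => a i ∈ AddSubmonoid.closure ((I.image b : Finset ℕ) : Set ℕ))).card :=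
  stmt_2_general n a b ha hreg
end

section
/- Let m ≥ n ≥ 1 and let a_1,…,a_m and b_1,…,b_n be positive integers such that the multiset union ⨄_{j=1}^n D(b_j) is contained, as a multiset, in ⨄_{i=1}^m D(a_i). Let I ⊆ {1,…,n} be nonempty and let g = gcd{b_j : j ∈ I}. Then the number of indices i ∈ {1,…,m} (counted with multiplicity) such that g divides a_i is at least #I. -/
open Finset

theorem Nat.count_sum_divisors_val {ι : Type*} (s : Finset ι) (f : ι → ℕ) (d : ℕ) :
    (∑ i ∈ s, (f i).divisors.val).count d = #{i ∈ s | d ∣ f i ∧ f i ≠ 0} := by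
  rw [Multiset.count_sum', card_filter]
  refine sum_congr rfl fun i _ => ?_
  simp only [Multiset.count_eq_of_nodup (f i).divisors.nodup, Finset.mem_val, Nat.mem_divisors]

theorem stmt_10_general (m n : ℕ) (a : Fin m → ℕ) (b : Fin n → ℕ)
    (hb : ∀ j, 0 < b j)
    (hsub : (∑ j, ((b j).divisors.val : Multiset ℕ)) ≤ ∑ i, ((a i).divisors.val : Multiset ℕ))
    (I : Finset (Fin n)) :
    I.card ≤ (Finset.univ.filter (fun i : Fin m => I.gcd b ∣ a i)).card := by
  set g := I.gcd b
  calc #I = #{j ∈ I | g ∣ b j ∧ b j ≠ 0} :=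
        (congrArg card (filter_true_of_mem fun j hj => ⟨gcd_dvd hj, (hb j).ne'⟩)).symm
    _ ≤ #{j | g ∣ b j ∧ b j ≠ 0} := card_le_card (filter_subset_filter _ (subset_univ I))
    _ = (∑ j, (b j).divisors.val).count g := (Nat.count_sum_divisors_val _ _ _).symm
    _ ≤ (∑ i, (a i).divisors.val).count g := Multiset.count_le_of_le g hsub
    _ = #{i | g ∣ a i ∧ a i ≠ 0} := Nat.count_sum_divisors_val _ _ _
    _ ≤ #{i | g ∣ a i} := card_le_card (monotone_filter_right _ fun _ _ h => h.1)

/-- **Step in the proof of Theorem 3.8.** Let `m ≥ n ≥ 1` and `a_1,…,a_m`, `b_1,…,b_n`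
be positive integers such that the multiset union of the divisor multisets `D(bⱼ)` is
contained (as a multiset) in the multiset union of the `D(aᵢ)`. Then for every nonempty
`I ⊆ {1,…,n}`, setting `g = gcd{bⱼ : j ∈ I}`, the number of indices `i` with `g ∣ aᵢ`
is at least `#I`. -/
theorem stmt_10 (m n : ℕ) (hn : 1 ≤ n) (hmn : n ≤ m) (a : Fin m → ℕ) (b : Fin n → ℕ)
    (ha : ∀ i, 0 < a i) (hb : ∀ j, 0 < b j)
    (hsub : (∑ j, ((b j).divisors.val : Multiset ℕ)) ≤ ∑ i, ((a i).divisors.val : Multiset ℕ))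
    (I : Finset (Fin n)) (hI : I.Nonempty) :
    I.card ≤ (Finset.univ.filter (fun i : Fin m => I.gcd b ∣ a i)).card :=
  stmt_10_general m n a b hb hsub I
end

section
/- Let m ≥ n ≥ 1 and let a_1,…,a_m and b_1,…,b_n be positive integers. If ∏_{j=1}^n (1−q^{b_j}) divides ∏_{i=1}^m (1−q^{a_i}) in ℤ[q], then for every j ∈ {1,…,n} there exists i ∈ {1,…,m} such that b_j divides a_i. -/
open Polynomial

/-! The cyclotomic polynomial `Φ_b` divides `1 - q^b`, hence the left-hand product. Being
irreducible in the UFD `ℤ[q]`, it is prime, so it divides some factor `1 - q^{a_i}`; then a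
primitive `b`-th root of unity is a root of `q^{a_i} - 1`, which forces `b ∣ a_i`. -/

theorem dvd_of_cyclotomic_dvd_X_pow_sub_one {d a : ℕ} (hd : 0 < d)
    (h : cyclotomic d ℤ ∣ X ^ a - 1) : d ∣ a := by
  have hζ := Complex.isPrimitiveRoot_exp d hd.ne'
  have hdvd : cyclotomic d ℂ ∣ X ^ a - 1 := by simpa using map_dvd (Int.castRingHom ℂ) h
  have hroot := (hζ.isRoot_cyclotomic hd).dvd hdvd
  exact hζ.dvd_of_pow_eq_one a (by simpa [sub_eq_zero] using hroot)

theorem exists_dvd_of_cyclotomic_dvd_prod {ι : Type*} (s : Finset ι) (a : ι → ℕ) {d : ℕ}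
    (hd : 0 < d) (h : cyclotomic d ℤ ∣ ∏ i ∈ s, (1 - X ^ a i)) : ∃ i ∈ s, d ∣ a i := by
  obtain ⟨i, hi, hdvd⟩ := (cyclotomic.irreducible hd).prime.exists_mem_finset_dvd h
  exact ⟨i, hi, dvd_of_cyclotomic_dvd_X_pow_sub_one hd (by rwa [← neg_sub, dvd_neg])⟩

theorem stmt_11_general (m n : ℕ) (a : Fin m → ℕ) (b : Fin n → ℕ)
    (hb : ∀ j, 0 < b j)
    (hdvd : (∏ j, (1 - X ^ (b j)) : ℤ[X]) ∣ ∏ i, (1 - X ^ (a i))) :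
    ∀ j, ∃ i, b j ∣ a i := by
  intro j
  have hcyc : cyclotomic (b j) ℤ ∣ ∏ i, (1 - X ^ (a i)) :=
    calc cyclotomic (b j) ℤ ∣ 1 - X ^ b j := by
          rw [← neg_sub, dvd_neg]; exact cyclotomic.dvd_X_pow_sub_one _ _
      _ ∣ ∏ j, (1 - X ^ (b j)) := Finset.dvd_prod_of_mem _ (Finset.mem_univ j)
      _ ∣ _ := hdvd
  obtain ⟨i, -, hi⟩ := exists_dvd_of_cyclotomic_dvd_prod Finset.univ a (hb j) hcyc
  exact ⟨i, hi⟩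

/-- **Remark 4.3.** Let `m ≥ n ≥ 1` and `a_1,…,a_m`, `b_1,…,b_n` be positive integers.
If `∏ⱼ (1 - q^{bⱼ})` divides `∏ᵢ (1 - q^{aᵢ})` in `ℤ[q]`, then for every `j` there
exists `i` such that `bⱼ ∣ aᵢ`. -/
theorem stmt_11 (m n : ℕ) (hn : 1 ≤ n) (hmn : n ≤ m) (a : Fin m → ℕ) (b : Fin n → ℕ)
    (ha : ∀ i, 0 < a i) (hb : ∀ j, 0 < b j)
    (hdvd : (∏ j, (1 - X ^ (b j)) : ℤ[X]) ∣ ∏ i, (1 - X ^ (a i))) :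
    ∀ j, ∃ i, b j ∣ a i :=
  stmt_11_general m n a b hb hdvd
end

section
/- Let m ≥ n ≥ 1 and let a_1,…,a_m and b_1,…,b_n be positive integers such that ∏_{j=1}^n (1−q^{b_j}) divides ∏_{i=1}^m (1−q^{a_i}) in ℤ[q], and let Δ denote the multiset difference (⨄_{i=1}^m D(a_i)) \ (⨄_{j=1}^n D(b_j)). Suppose Δ can be written as a multiset sum Δ = M_1 ⊎ … ⊎ M_r, where for each t there are a prime p_t, an integer k_t ≥ 1, and a positive integer d_t with p_t ∤ d_t such that M_t is the multiset [p_t^{k_t}·d' : d' a positive divisor of d_t]. Then the unique polynomial P ∈ ℤ[q] with P·∏_{j=1}^n (1−q^{b_j}) = ∏_{i=1}^m (1−q^{a_i}) has all coefficients nonnegative. -/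
/-!
Write `Φ_S = ∏_{c ∈ S} Φ_c` for a multiset `S`. Since `q^a - 1 = Φ_{D(a)}`, the divisibility
hypothesis says `Φ_{⨄ D(bⱼ)} ∣ Φ_{⨄ D(aᵢ)}`, and unique factorisation in `ℤ[q]` turns this into
`⨄ D(bⱼ) ≤ ⨄ D(aᵢ)`; hence `P = ±Φ_Δ`. A block `[p^k d' : d' ∣ d]` with `p ∤ d` contributes
`(q^{p^k d} - 1)/(q^{p^{k-1} d} - 1) = ∑_{i < p} q^{i p^{k-1} d}`, obtained by applying
`q ↦ q^{p^{k-1}}` to `Φ_{pd'} Φ_{d'} = Φ_{d'}(q^p)`; so `Φ_Δ` has nonnegative coefficients.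
The sign is `+` because no block contains `1`, so `Φ_1 = q - 1` occurs equally often, `m = n`
times, on both sides.
-/

open Polynomial

namespace CyclotomicQuotient

variable (R : Type*) [CommRing R]

noncomputable def cyclotomicProd (s : Multiset ℕ) : R[X] := (s.map (cyclotomic · R)).prod

theorem cyclotomicProd_add (s t : Multiset ℕ) :
    cyclotomicProd R (s + t) = cyclotomicProd R s * cyclotomicProd R t := by
  simp only [cyclotomicProd, Multiset.map_add, Multiset.prod_add]

theorem cyclotomicProd_sum {ι : Type*} (s : Finset ι) (f : ι → Multiset ℕ) :
    cyclotomicProd R (∑ i ∈ s, f i) = ∏ i ∈ s, cyclotomicProd R (f i) := by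
  rw [cyclotomicProd, ← Multiset.coe_mapAddMonoidHom, map_sum, Multiset.prod_sum]
  rfl

theorem cyclotomicProd_divisors {n : ℕ} (hn : 0 < n) :
    cyclotomicProd R n.divisors.val = X ^ n - 1 :=
  prod_cyclotomic_eq_X_pow_sub_one hn R

theorem prod_one_sub_X_pow {ι : Type*} [Fintype ι] {a : ι → ℕ} (ha : ∀ i, 0 < a i) :
    ∏ i, (1 - X ^ a i : R[X]) =
      (-1) ^ Fintype.card ι * cyclotomicProd R (∑ i, (a i).divisors.val) := by
  rw [cyclotomicProd_sum, ← Finset.card_univ, ← Finset.prod_const, ← Finset.prod_mul_distrib]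
  exact Finset.prod_congr rfl fun i _ => by rw [cyclotomicProd_divisors R (ha i)]; ring

theorem prod_cyclotomic_prime_mul_mul_X_pow_sub_one {p d : ℕ} (hp : p.Prime) (hd : 0 < d)
    (hpd : ¬ p ∣ d) :
    (∏ e ∈ d.divisors, cyclotomic (p * e) R) * (X ^ d - 1) = X ^ (p * d) - 1 := by
  have hexpand : expand R p (X ^ d - 1) = X ^ (p * d) - 1 := by
    rw [map_sub, map_one, map_pow, expand_X, ← pow_mul]
  rw [← hexpand, ← prod_cyclotomic_eq_X_pow_sub_one hd, map_prod, ← Finset.prod_mul_distrib]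
  refine Finset.prod_congr rfl fun e he => ?_
  rw [cyclotomic_expand_eq_cyclotomic_mul hp (fun h => hpd (h.trans (Nat.dvd_of_mem_divisors he))),
    mul_comm e]

theorem cyclotomic_prime_pow_mul_eq_expand {p : ℕ} (hp : p.Prime) (k n : ℕ) :
    cyclotomic (p ^ k * (p * n)) R = expand R (p ^ k) (cyclotomic (p * n) R) := by
  induction k with
  | zero => simp
  | succ k ih =>
    rw [pow_succ', expand_mul, ← ih, cyclotomic_expand_eq_cyclotomic hp
      (dvd_mul_of_dvd_right (dvd_mul_right p n) _)]
    ring_nf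

theorem cyclotomicProd_prime_pow_mul_divisors {p d : ℕ} (hp : p.Prime) (hd : 0 < d)
    (hpd : ¬ p ∣ d) (k : ℕ) :
    cyclotomicProd R (d.divisors.val.map (p ^ (k + 1) * ·)) =
      ∑ i ∈ Finset.range p, (X ^ (p ^ k * d)) ^ i := by
  have hmonic : (X ^ (p ^ k * d) - 1 : R[X]).Monic := by
    simpa using monic_X_pow_sub_C (1 : R) (Nat.mul_pos (pow_pos hp.pos k) hd).ne'
  refine hmonic.isRegular.right ?_
  have h := congrArg (expand R (p ^ k)) (prod_cyclotomic_prime_mul_mul_X_pow_sub_one R hp hd hpd)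
  simp only [map_mul, map_sub, map_one, map_pow, expand_X, map_prod, ← pow_mul,
    ← cyclotomic_prime_pow_mul_eq_expand R hp] at h
  calc cyclotomicProd R (d.divisors.val.map (p ^ (k + 1) * ·)) * (X ^ (p ^ k * d) - 1)
      = (∏ e ∈ d.divisors, cyclotomic (p ^ k * (p * e)) R) * (X ^ (p ^ k * d) - 1) := by
        simp only [cyclotomicProd, Multiset.map_map, Function.comp_def, pow_succ,
          mul_assoc, Finset.prod_eq_multiset_prod]
    _ = X ^ (p ^ k * (p * d)) - 1 := h
    _ = (∑ i ∈ Finset.range p, (X ^ (p ^ k * d)) ^ i) * (X ^ (p ^ k * d) - 1) := by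
        rw [geom_sum_mul, ← pow_mul, mul_left_comm, mul_comm]

theorem le_of_cyclotomicProd_dvd {s t : Multiset ℕ} (hs : ∀ c ∈ s, 0 < c) (ht : ∀ c ∈ t, 0 < c)
    (h : cyclotomicProd ℤ s ∣ cyclotomicProd ℤ t) : s ≤ t := by
  let φ : ℕ → Associates ℤ[X] := fun c => Associates.mk (cyclotomic c ℤ)
  have hφ : Function.Injective φ := fun c c' hc =>
    cyclotomic_injective (eq_of_monic_of_associated (cyclotomic.monic c ℤ)
      (cyclotomic.monic c' ℤ) (Associates.mk_eq_mk_iff_associated.mp hc))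
  have hprod (u : Multiset ℕ) : (u.map φ).prod = Associates.mk (cyclotomicProd ℤ u) := by
    rw [cyclotomicProd, ← Associates.prod_mk, Multiset.map_map]
    rfl
  have hirr {u : Multiset ℕ} (hu : ∀ c ∈ u, 0 < c) : ∀ x ∈ u.map φ, Irreducible x := by
    simp only [Multiset.mem_map, forall_exists_index, and_imp, forall_apply_eq_imp_iff₂]
    exact fun c hc => Associates.irreducible_mk.mpr (cyclotomic.irreducible (hu c hc))
  rw [← Multiset.map_le_map_iff hφ, ← Associates.prod_le_prod_iff_le (hirr hs) (hirr ht),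
    hprod, hprod]
  exact Associates.mk_le_mk_iff_dvd.mpr h

theorem pos_of_mem_sum_divisors {ι : Type*} {s : Finset ι} {a : ι → ℕ} {c : ℕ}
    (hc : c ∈ ∑ i ∈ s, (a i).divisors.val) : 0 < c := by
  obtain ⟨i, -, hi⟩ := Multiset.mem_sum.mp hc
  exact Nat.pos_of_mem_divisors hi

theorem count_one_sum_divisors {ι : Type*} [Fintype ι] {a : ι → ℕ} (ha : ∀ i, 0 < a i) :
    (∑ i, (a i).divisors.val).count 1 = Fintype.card ι := by
  rw [Multiset.count_sum', ← Finset.card_univ, Finset.card_eq_sum_ones]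
  refine Finset.sum_congr rfl fun i _ => Multiset.count_eq_one_of_mem (a i).divisors.nodup ?_
  exact Nat.one_mem_divisors.mpr (ha i).ne'

theorem count_one_sum_map_mul_left {ι : Type*} [Fintype ι] {c : ι → ℕ} (hc : ∀ t, c t ≠ 1)
    (s : ι → Multiset ℕ) : (∑ t, (s t).map (c t * ·)).count 1 = 0 := by
  refine Multiset.count_eq_zero.mpr fun h => ?_
  obtain ⟨t, -, ht⟩ := Multiset.mem_sum.mp h
  obtain ⟨x, -, hx⟩ := Multiset.mem_map.mp ht
  exact hc t (Nat.eq_one_of_mul_eq_one_right hx)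

theorem cyclotomicProd_sum_prime_pow_mul_divisors_mem_rangeS {ι : Type*} [Fintype ι]
    {p k d : ι → ℕ} (hp : ∀ t, (p t).Prime) (hk : ∀ t, 1 ≤ k t) (hd : ∀ t, 0 < d t)
    (hpd : ∀ t, ¬ p t ∣ d t) :
    cyclotomicProd ℤ (∑ t, (d t).divisors.val.map (p t ^ k t * ·)) ∈
      (mapRingHom (Nat.castRingHom ℤ)).rangeS := by
  rw [cyclotomicProd_sum]
  refine Subsemiring.prod_mem _ fun t _ => ?_
  obtain ⟨j, hj⟩ := Nat.exists_eq_add_of_le' (hk t)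
  rw [hj, cyclotomicProd_prime_pow_mul_divisors ℤ (hp t) (hd t) (hpd t)]
  exact ⟨∑ i ∈ Finset.range (p t), (X ^ (p t ^ j * d t)) ^ i, by simp⟩

end CyclotomicQuotient

open CyclotomicQuotient

theorem stmt_13_general (m n : ℕ) (a : Fin m → ℕ) (b : Fin n → ℕ)
    (ha : ∀ i, 0 < a i) (hb : ∀ j, 0 < b j)
    (hdvd : (∏ j, (1 - X ^ (b j)) : ℤ[X]) ∣ ∏ i, (1 - X ^ (a i)))
    (hΔ : ∃ (r : ℕ) (p k d : Fin r → ℕ),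
      (∀ t, (p t).Prime) ∧ (∀ t, 1 ≤ k t) ∧ (∀ t, 0 < d t) ∧ (∀ t, ¬ p t ∣ d t) ∧
      (∑ i, ((a i).divisors.val : Multiset ℕ)) - (∑ j, ((b j).divisors.val : Multiset ℕ)) =
        ∑ t, ((d t).divisors.val.map (fun d' => p t ^ k t * d'))) :
    ∀ P : ℤ[X], P * ∏ j, (1 - X ^ (b j)) = ∏ i, (1 - X ^ (a i)) →
      ∀ j, 0 ≤ P.coeff j := by
  intro P hP j
  obtain ⟨r, p, k, d, hp, hk, hd, hpd, hΔ⟩ := hΔ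
  have hBA : ∑ j, (b j).divisors.val ≤ ∑ i, (a i).divisors.val := by
    refine le_of_cyclotomicProd_dvd (fun _ => pos_of_mem_sum_divisors)
      (fun _ => pos_of_mem_sum_divisors) ?_
    rwa [prod_one_sub_X_pow ℤ ha, prod_one_sub_X_pow ℤ hb, (isUnit_neg_one.pow _).mul_left_dvd,
      (isUnit_neg_one.pow _).dvd_mul_left] at hdvd
  -- Count the divisor `1`: `m` times in `⨄ D(aᵢ)`, `n` times in `⨄ D(bⱼ)`, never in `Δ`.
  have hmn : m = n := by
    have hcount := congrArg (Multiset.count 1) hΔ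
    have hle := Multiset.count_le_of_le 1 hBA
    rw [Multiset.count_sub, count_one_sum_map_mul_left
        (fun t => (Nat.one_lt_pow (Nat.one_le_iff_ne_zero.mp (hk t)) (hp t).one_lt).ne')] at hcount
    simp only [count_one_sum_divisors ha, count_one_sum_divisors hb, Fintype.card_fin]
      at hcount hle
    omega
  subst hmn
  have hPΔ : P = cyclotomicProd ℤ (∑ t, (d t).divisors.val.map (p t ^ k t * ·)) := by
    have hB : (∏ j, (1 - X ^ b j) : ℤ[X]) ≠ 0 := Finset.prod_ne_zero_iff.mpr fun j _ h =>
      X_pow_sub_C_ne_zero (hb j) (1 : ℤ) (by rw [C_1, ← neg_sub, h, neg_zero])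
    refine mul_right_cancel₀ hB ?_
    rw [hP, prod_one_sub_X_pow ℤ ha, prod_one_sub_X_pow ℤ hb, ← tsub_add_cancel_of_le hBA, hΔ,
      cyclotomicProd_add]
    ring
  obtain ⟨Q, hQ⟩ := cyclotomicProd_sum_prime_pow_mul_divisors_mem_rangeS hp hk hd hpd
  rw [hPΔ, ← hQ, coe_mapRingHom, coeff_map]
  exact Int.natCast_nonneg _

/-- **Proposition 4.1(1).** Let `m ≥ n ≥ 1` and `a_1,…,a_m`, `b_1,…,b_n` be positive
integers with `∏ⱼ (1 - q^{bⱼ}) ∣ ∏ᵢ (1 - q^{aᵢ})` in `ℤ[q]`. Let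
`Δ = (⨄ᵢ D(aᵢ)) \ (⨄ⱼ D(bⱼ))` be the multiset difference of the divisor multisets.
If `Δ` is a multiset sum of multisets of the form `[p^k·d' : d' ∣ d]` with `p` prime,
`k ≥ 1` and `p ∤ d`, then the quotient polynomial has nonnegative coefficients. -/
theorem stmt_13 (m n : ℕ) (hn : 1 ≤ n) (hmn : n ≤ m) (a : Fin m → ℕ) (b : Fin n → ℕ)
    (ha : ∀ i, 0 < a i) (hb : ∀ j, 0 < b j)
    (hdvd : (∏ j, (1 - X ^ (b j)) : ℤ[X]) ∣ ∏ i, (1 - X ^ (a i)))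
    (hΔ : ∃ (r : ℕ) (p k d : Fin r → ℕ),
      (∀ t, (p t).Prime) ∧ (∀ t, 1 ≤ k t) ∧ (∀ t, 0 < d t) ∧ (∀ t, ¬ p t ∣ d t) ∧
      (∑ i, ((a i).divisors.val : Multiset ℕ)) - (∑ j, ((b j).divisors.val : Multiset ℕ)) =
        ∑ t, ((d t).divisors.val.map (fun d' => p t ^ k t * d'))) :
    ∀ P : ℤ[X], P * ∏ j, (1 - X ^ (b j)) = ∏ i, (1 - X ^ (a i)) →
      ∀ j, 0 ≤ P.coeff j :=
  stmt_13_general m n a b ha hb hdvd hΔ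
end

section
/- Let m ≥ n ≥ 1 and let a_1,…,a_m and b_1,…,b_n be positive integers such that ∏_{j=1}^n (1−q^{b_j}) divides ∏_{i=1}^m (1−q^{a_i}) in ℤ[q], and let Δ denote the multiset difference (⨄_{i=1}^m D(a_i)) \ (⨄_{j=1}^n D(b_j)). Suppose Δ can be written as a multiset sum Δ = D_1 ⊎ … ⊎ D_r, where each D_t satisfies one of: (a) every element of D_t is a prime power p^e with e ≥ 1; or (b) D_t = [d, d·p] for some prime p and some d which is a prime power q'^e with q' prime and e ≥ 1. Then the unique polynomial P ∈ ℤ[q] with P·∏_{j=1}^n (1−q^{b_j}) = ∏_{i=1}^m (1−q^{a_i}) has all coefficients nonnegative. -/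
/-!
Since `∏_{c ∣ k} Φ_c = X^k - 1`, both products are, up to sign, products of cyclotomic
polynomials over the divisor multisets `A = ⨄ D(aᵢ)` and `B = ⨄ D(bⱼ)`. Counting primitive
`c`-th roots of unity shows that divisibility forces `B ≤ A`; as `1 ∉ Δ`, `A` and `B` contain
`1` equally often, so `m = n`, the signs cancel and `P = ∏_{c ∈ Δ} Φ_c`. Each block has
nonnegative coefficients: `Φ_{p^e} = ∑_{i<p} X^{i p^(e-1)}`, and `Φ_d Φ_{dp}` equals
`Φ_d(X^p)` if `p ∤ d` and `Φ_d · Φ_d(X^p)` if `p ∣ d`.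
-/

open Polynomial

theorem Multiset.prod_map_finset_sum {ι α M : Type*} [CommMonoid M] (s : Finset ι)
    (g : ι → Multiset α) (f : α → M) :
    ((∑ i ∈ s, g i).map f).prod = ∏ i ∈ s, ((g i).map f).prod := by
  classical
  induction s using Finset.induction_on with
  | empty => simp
  | insert a s ha ih =>
    rw [Finset.sum_insert ha, Finset.prod_insert ha, Multiset.map_add, Multiset.prod_add, ih]

theorem Multiset.count_eq_of_le_of_notMem_tsub {α : Type*} [DecidableEq α] {s t : Multiset α}
    {a : α} (hst : s ≤ t) (ha : a ∉ t - s) : t.count a = s.count a := by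
  have hsub := Multiset.count_sub a t s
  have hle := Multiset.count_le_of_le a hst
  rw [Multiset.count_eq_zero.mpr ha] at hsub
  omega

namespace Nat

theorem zero_notMem_sum_divisors {ι : Type*} (s : Finset ι) (a : ι → ℕ) :
    0 ∉ ∑ i ∈ s, (a i).divisors.val := by
  rw [Multiset.mem_sum]
  rintro ⟨i, -, hi⟩
  exact (Nat.pos_of_mem_divisors hi).ne' rfl

theorem count_one_sum_divisors {ι : Type*} (s : Finset ι) (a : ι → ℕ)
    (ha : ∀ i ∈ s, 0 < a i) :
    (∑ i ∈ s, (a i).divisors.val).count 1 = s.card := by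
  rw [Multiset.count_sum', Finset.card_eq_sum_ones]
  exact Finset.sum_congr rfl fun i hi =>
    Multiset.count_eq_one_of_mem (a i).divisors.nodup (Nat.one_mem_divisors.mpr (ha i hi).ne')

end Nat

namespace Polynomial

section NonnegCoeffs

variable (R : Type*) [CommRing R] [PartialOrder R] [IsOrderedRing R]

def nonnegCoeffs : Subsemiring R[X] where
  carrier := {p | ∀ k, 0 ≤ p.coeff k}
  mul_mem' {p q} hp hq k := by
    rw [coeff_mul]
    exact Finset.sum_nonneg fun x _ => mul_nonneg (hp _) (hq _)
  one_mem' k := by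
    rw [coeff_one]
    split_ifs <;> simp
  add_mem' {p q} hp hq k := by
    rw [coeff_add]
    exact add_nonneg (hp k) (hq k)
  zero_mem' k := le_rfl

variable {R}

theorem mem_nonnegCoeffs {p : R[X]} : p ∈ nonnegCoeffs R ↔ ∀ k, 0 ≤ p.coeff k := Iff.rfl

theorem X_pow_mem_nonnegCoeffs (n : ℕ) : (X ^ n : R[X]) ∈ nonnegCoeffs R := fun k => by
  rw [coeff_X_pow]
  split_ifs <;> simp

theorem expand_mem_nonnegCoeffs {p : ℕ} (hp : 0 < p) {f : R[X]} (hf : f ∈ nonnegCoeffs R) :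
    expand R p f ∈ nonnegCoeffs R := fun k => by
  rw [coeff_expand hp]
  split_ifs
  exacts [hf _, le_rfl]

theorem cyclotomic_prime_pow_mem_nonnegCoeffs {p e : ℕ} (hp : p.Prime) (he : e ≠ 0) :
    cyclotomic (p ^ e) R ∈ nonnegCoeffs R := by
  obtain ⟨e, rfl⟩ := Nat.exists_eq_succ_of_ne_zero he
  rw [cyclotomic_prime_pow_eq_geom_sum hp]
  exact sum_mem fun i _ => pow_mem (X_pow_mem_nonnegCoeffs _) i

theorem cyclotomic_mem_nonnegCoeffs_of_isPrimePow {n : ℕ} (hn : IsPrimePow n) :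
    cyclotomic n R ∈ nonnegCoeffs R := by
  obtain ⟨p, e, hp, he, rfl⟩ := (isPrimePow_nat_iff n).mp hn
  exact cyclotomic_prime_pow_mem_nonnegCoeffs hp he.ne'

theorem cyclotomic_mul_cyclotomic_mul_prime_mem_nonnegCoeffs {d p : ℕ} (hp : p.Prime)
    (hd : cyclotomic d R ∈ nonnegCoeffs R) :
    cyclotomic d R * cyclotomic (d * p) R ∈ nonnegCoeffs R := by
  by_cases hpd : p ∣ d
  · rw [← cyclotomic_expand_eq_cyclotomic hp hpd]
    exact mul_mem hd (expand_mem_nonnegCoeffs hp.pos hd)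
  · rw [mul_comm, ← cyclotomic_expand_eq_cyclotomic_mul hp hpd]
    exact expand_mem_nonnegCoeffs hp.pos hd

end NonnegCoeffs

theorem count_roots_prod_cyclotomic {S : Multiset ℕ} (hS : 0 ∉ S) {c : ℕ} {ζ : ℂ}
    (hζ : IsPrimitiveRoot ζ c) :
    ((S.map (cyclotomic · ℂ)).prod.roots).count ζ = S.count c := by
  classical
  have hroot : ∀ c' ∈ S,
      ((cyclotomic c' ℂ).roots).count ζ = ({c'} : Multiset ℕ).count c := by
    intro c' hc'
    have : NeZero c' := ⟨fun h => hS (h ▸ hc')⟩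
    rw [Multiset.count_eq_of_nodup roots_cyclotomic_nodup, Multiset.count_singleton]
    simp only [mem_roots (cyclotomic_ne_zero c' ℂ), isRoot_cyclotomic_iff]
    exact if_congr ⟨fun h => (h.unique hζ).symm, fun h => h ▸ hζ⟩ rfl rfl
  calc ((S.map (cyclotomic · ℂ)).prod.roots).count ζ
      = (S.map fun c' => ((cyclotomic c' ℂ).roots).count ζ).sum := by
        rw [roots_multiset_prod _ (by simp [cyclotomic_ne_zero]), Multiset.bind_map,
          Multiset.count_bind]
    _ = (S.map fun c' => ({c'} : Multiset ℕ).count c).sum :=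
        congrArg _ (Multiset.map_congr rfl hroot)
    _ = S.count c := by rw [← Multiset.count_bind, Multiset.bind_singleton, Multiset.map_id']

theorem le_of_prod_cyclotomic_dvd {S T : Multiset ℕ} (hS : 0 ∉ S) (hT : 0 ∉ T)
    (h : (S.map (cyclotomic · ℤ)).prod ∣ (T.map (cyclotomic · ℤ)).prod) : S ≤ T := by
  have hℂ : (S.map (cyclotomic · ℂ)).prod ∣ (T.map (cyclotomic · ℂ)).prod := by
    simpa [Polynomial.map_multiset_prod, Multiset.map_map, Function.comp_def] using
      Polynomial.map_dvd (Int.castRingHom ℂ) h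
  have hT0 : (T.map (cyclotomic · ℂ)).prod ≠ 0 :=
    (monic_multiset_prod_of_monic _ _ fun c _ => cyclotomic.monic c ℂ).ne_zero
  have hroots := roots.le_of_dvd hT0 hℂ
  rw [Multiset.le_iff_count]
  intro c
  rcases Nat.eq_zero_or_pos c with rfl | hc
  · simp [Multiset.count_eq_zero.mpr hS]
  · have hζ := Complex.isPrimitiveRoot_exp c hc.ne'
    rw [← count_roots_prod_cyclotomic hS hζ, ← count_roots_prod_cyclotomic hT hζ]
    exact Multiset.count_le_of_le _ hroots

theorem prod_one_sub_X_pow_eq {ι R : Type*} [CommRing R] (s : Finset ι) (a : ι → ℕ)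
    (ha : ∀ i ∈ s, 0 < a i) :
    ∏ i ∈ s, (1 - X ^ a i : R[X]) =
      (-1) ^ s.card * ((∑ i ∈ s, (a i).divisors.val).map (cyclotomic · R)).prod := by
  simp_rw [← neg_sub (X ^ _ : R[X]) 1]
  rw [Finset.prod_neg, Multiset.prod_map_finset_sum]
  congr 1
  exact Finset.prod_congr rfl fun i hi => (prod_cyclotomic_eq_X_pow_sub_one (ha i hi) R).symm

theorem eq_prod_cyclotomic_tsub_of_mul_eq {R : Type*} [CommRing R] [IsDomain R]
    {S T : Multiset ℕ} (hST : S ≤ T) {u P : R[X]} (hu : u ≠ 0)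
    (h : P * (u * (S.map (cyclotomic · R)).prod) = u * (T.map (cyclotomic · R)).prod) :
    P = ((T - S).map (cyclotomic · R)).prod := by
  refine mul_right_cancel₀ (mul_ne_zero hu
    (monic_multiset_prod_of_monic S _ fun c _ => cyclotomic.monic c R).ne_zero) ?_
  rw [h, mul_left_comm, ← Multiset.prod_add, ← Multiset.map_add, tsub_add_cancel_of_le hST]

end Polynomial

def IsAdmissibleBlock (D : Multiset ℕ) : Prop :=
  (∀ c ∈ D, IsPrimePow c) ∨ ∃ d p, IsPrimePow d ∧ p.Prime ∧ D = {d, d * p}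

namespace IsAdmissibleBlock

variable {D : Multiset ℕ}

theorem one_notMem (hD : IsAdmissibleBlock D) : 1 ∉ D := by
  rcases hD with hD | ⟨d, p, hd, hp, rfl⟩
  · exact fun h => (hD 1 h).ne_one rfl
  · have := hd.one_lt
    have := hp.one_lt
    simp only [Multiset.insert_eq_cons, Multiset.mem_cons, Multiset.mem_singleton, not_or]
    constructor <;> nlinarith

theorem prod_cyclotomic_mem_nonnegCoeffs {R : Type*} [CommRing R] [PartialOrder R]
    [IsOrderedRing R] (hD : IsAdmissibleBlock D) :
    (D.map (cyclotomic · R)).prod ∈ nonnegCoeffs R := by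
  rcases hD with hD | ⟨d, p, hd, hp, rfl⟩
  · exact multiset_prod_mem _ fun f hf => by
      obtain ⟨c, hc, rfl⟩ := Multiset.mem_map.mp hf
      exact cyclotomic_mem_nonnegCoeffs_of_isPrimePow (hD c hc)
  · simpa using cyclotomic_mul_cyclotomic_mul_prime_mem_nonnegCoeffs hp
      (cyclotomic_mem_nonnegCoeffs_of_isPrimePow (R := R) hd)

end IsAdmissibleBlock

theorem stmt_14_general (m n : ℕ) (a : Fin m → ℕ) (b : Fin n → ℕ)
    (ha : ∀ i, 0 < a i) (hb : ∀ j, 0 < b j)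
    (hΔ : ∃ (r : ℕ) (D : Fin r → Multiset ℕ),
      ((∑ i, ((a i).divisors.val : Multiset ℕ)) - (∑ j, ((b j).divisors.val : Multiset ℕ)) =
        ∑ t, D t) ∧
      (∀ t, (∀ c ∈ D t, ∃ p e : ℕ, p.Prime ∧ 1 ≤ e ∧ c = p ^ e) ∨
        (∃ p q' e : ℕ, p.Prime ∧ q'.Prime ∧ 1 ≤ e ∧
          D t = {q' ^ e, q' ^ e * p}))) :
    ∀ P : ℤ[X], P * ∏ j, (1 - X ^ (b j)) = ∏ i, (1 - X ^ (a i)) →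
      ∀ j, 0 ≤ P.coeff j := by
  intro P hP
  obtain ⟨r, D, hsum, hblocks⟩ := hΔ
  have hD : ∀ t, IsAdmissibleBlock (D t) := fun t => (hblocks t).imp
    (fun h c hc => by obtain ⟨p, e, hp, he, rfl⟩ := h c hc; exact hp.isPrimePow.pow (by omega))
    (fun ⟨p, q', e, hp, hq, he, h⟩ => ⟨q' ^ e, p, hq.isPrimePow.pow (by omega), hp, h⟩)
  set A := ∑ i, (a i).divisors.val
  set B := ∑ j, (b j).divisors.val
  rw [prod_one_sub_X_pow_eq _ _ fun i _ => ha i, prod_one_sub_X_pow_eq _ _ fun j _ => hb j] at hP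
  simp only [Finset.card_univ, Fintype.card_fin] at hP
  have hBA : B ≤ A := le_of_prod_cyclotomic_dvd (Nat.zero_notMem_sum_divisors _ _)
    (Nat.zero_notMem_sum_divisors _ _) <| ((isUnit_neg_one.pow m).dvd_mul_left).mp <|
      hP ▸ dvd_mul_of_dvd_right (dvd_mul_left _ _) P
  have h1Δ : 1 ∉ A - B := by
    rw [hsum, Multiset.mem_sum]
    rintro ⟨t, -, ht⟩
    exact (hD t).one_notMem ht
  obtain rfl : m = n := by
    have h1 := Multiset.count_eq_of_le_of_notMem_tsub hBA h1Δ
    rw [Nat.count_one_sum_divisors _ _ fun i _ => ha i,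
      Nat.count_one_sum_divisors _ _ fun j _ => hb j] at h1
    simpa using h1
  rw [← mem_nonnegCoeffs, eq_prod_cyclotomic_tsub_of_mul_eq hBA (by simp) hP, hsum,
    Multiset.prod_map_finset_sum]
  exact prod_mem fun t _ => (hD t).prod_cyclotomic_mem_nonnegCoeffs

/-- **Proposition 4.1(2).** Let `m ≥ n ≥ 1` and `a_1,…,a_m`, `b_1,…,b_n` be positive
integers with `∏ⱼ (1 - q^{bⱼ}) ∣ ∏ᵢ (1 - q^{aᵢ})` in `ℤ[q]`. Let
`Δ = (⨄ᵢ D(aᵢ)) \ (⨄ⱼ D(bⱼ))` be the multiset difference of the divisor multisets.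
If `Δ` is a multiset sum of multisets `D_t` such that each `D_t` either (a) consists
entirely of prime powers `p^e` with `e ≥ 1`, or (b) equals `[d, d·p]` for some prime `p`
and `d` a prime power, then the quotient polynomial has nonnegative coefficients. -/
theorem stmt_14 (m n : ℕ) (hn : 1 ≤ n) (hmn : n ≤ m) (a : Fin m → ℕ) (b : Fin n → ℕ)
    (ha : ∀ i, 0 < a i) (hb : ∀ j, 0 < b j)
    (hdvd : (∏ j, (1 - X ^ (b j)) : ℤ[X]) ∣ ∏ i, (1 - X ^ (a i)))
    (hΔ : ∃ (r : ℕ) (D : Fin r → Multiset ℕ),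
      ((∑ i, ((a i).divisors.val : Multiset ℕ)) - (∑ j, ((b j).divisors.val : Multiset ℕ)) =
        ∑ t, D t) ∧
      (∀ t, (∀ c ∈ D t, ∃ p e : ℕ, p.Prime ∧ 1 ≤ e ∧ c = p ^ e) ∨
        (∃ p q' e : ℕ, p.Prime ∧ q'.Prime ∧ 1 ≤ e ∧
          D t = {q' ^ e, q' ^ e * p}))) :
    ∀ P : ℤ[X], P * ∏ j, (1 - X ^ (b j)) = ∏ i, (1 - X ^ (a i)) →
      ∀ j, 0 ≤ P.coeff j :=
  stmt_14_general m n a b ha hb hΔ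
end

section
/- Let n_1,…,n_r be integers, each at least 2, and let f(x) = ∏_{i=1}^r Φ_{n_i}(x), a product of cyclotomic polynomials regarded as a polynomial with real coefficients. Then there exists a natural number k such that the polynomial f(x)·(1+x)^k has all coefficients nonnegative. -/
/-!
Over `ℝ`, a monic polynomial whose complex roots all lie on the unit circle and differ from `1`
(such as `Φ_n` for `n ≥ 2`) splits into factors `X + 1` and `X ^ 2 - 2 c X + 1`, where `c = Re z < 1`
for a non-real root `z`; and the property "some `f * (1 + X) ^ k` has nonnegative coefficients" is multiplicative.
For the quadratic factor write `X ^ 2 - 2 c X + 1 = (1 + X) ^ 2 - 2 (1 + c) X`: the coefficient of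
`X ^ (m + 1)` after multiplying by `(1 + X) ^ k` is `C(k + 2, m + 1) - 2 (1 + c) C(k, m)`, and
`C(k + 2, m + 1) / C(k, m) = (k + 2) (k + 1) / ((m + 1) (k + 1 - m)) ≥ 4 (k + 1) / (k + 2)`,
which beats `2 (1 + c)` as soon as `(k + 2) (1 - c) ≥ 2`.
-/

open Polynomial Complex

theorem Polynomial.coeff_mul_nonneg {R : Type*} [Semiring R] [PartialOrder R] [IsOrderedRing R]
    {p q : R[X]} (hp : ∀ j, 0 ≤ p.coeff j) (hq : ∀ j, 0 ≤ q.coeff j) (j : ℕ) :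
    0 ≤ (p * q).coeff j := by
  rw [coeff_mul]
  exact Finset.sum_nonneg fun _ _ => mul_nonneg (hp _) (hq _)

theorem Nat.two_mul_choose_le_choose_add_two {c : ℝ} {k : ℕ} (hk : 2 ≤ (k + 2) * (1 - c))
    (m : ℕ) : 2 * (1 + c) * k.choose m ≤ (k + 2).choose (m + 1) := by
  rcases lt_or_ge k m with hkm | hmk
  · simp [Nat.choose_eq_zero_of_lt hkm]
  have h₁ : ((k + 2).choose (m + 1) : ℝ) * (m + 1) = (k + 2) * (k + 1).choose m := by
    exact_mod_cast (Nat.add_one_mul_choose_eq (k + 1) m).symm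
  have h₂ : ((k + 1).choose m : ℝ) * (k + 1 - m) = k.choose m * (k + 1) := by
    have := congrArg (Nat.cast : ℕ → ℝ) (Nat.choose_mul_succ_eq k m)
    push_cast [Nat.cast_sub (by omega : m ≤ k + 1)] at this
    exact this.symm
  set a : ℝ := m + 1
  set b : ℝ := k + 1 - m
  have ha : 1 ≤ a := by simp [a]
  have hb : 1 ≤ b := by
    have : (m : ℝ) ≤ k := by exact_mod_cast hmk
    simp only [b]; linarith
  have hab : a + b = k + 2 := by simp only [a, b]; ring
  have hchoose : ((k + 2).choose (m + 1) : ℝ) * (a * b) = (a + b) * (a + b - 1) * k.choose m := by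
    rw [hab]; linear_combination b * h₁ + (k + 2) * h₂
  -- `4 a b ≤ (a + b) ^ 2` together with `(a + b) (1 - c) ≥ 2`
  have hquad : 2 * (1 + c) * (a * b) ≤ (a + b) * (a + b - 1) := by
    rcases le_or_gt (1 + c) 0 with hc | hc
    · nlinarith [mul_nonneg (by linarith : (0 : ℝ) ≤ a + b) (by linarith : (0 : ℝ) ≤ a + b - 1),
        mul_nonpos_of_nonpos_of_nonneg hc (by positivity : (0 : ℝ) ≤ a * b)]
    · nlinarith [mul_nonneg hc.le (sq_nonneg (a - b))]
  have hab0 : 0 < a * b := by positivity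
  refine le_of_mul_le_mul_right ?_ hab0
  calc 2 * (1 + c) * k.choose m * (a * b) = 2 * (1 + c) * (a * b) * k.choose m := by ring
    _ ≤ (a + b) * (a + b - 1) * k.choose m := by gcongr
    _ = _ := hchoose.symm

def HasNonnegCoeffsMulOneAddXPow (f : ℝ[X]) : Prop :=
  ∃ k : ℕ, ∀ j, 0 ≤ (f * (1 + X) ^ k).coeff j

namespace HasNonnegCoeffsMulOneAddXPow

theorem one_add_X_pow (n : ℕ) : HasNonnegCoeffsMulOneAddXPow ((1 + X) ^ n) :=
  ⟨0, fun j => by simp [coeff_one_add_X_pow]⟩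

theorem one : HasNonnegCoeffsMulOneAddXPow 1 := by
  simpa using one_add_X_pow 0

theorem mul {p q : ℝ[X]} (hp : HasNonnegCoeffsMulOneAddXPow p)
    (hq : HasNonnegCoeffsMulOneAddXPow q) : HasNonnegCoeffsMulOneAddXPow (p * q) := by
  obtain ⟨a, ha⟩ := hp
  obtain ⟨b, hb⟩ := hq
  refine ⟨a + b, fun j => ?_⟩
  rw [show p * q * (1 + X) ^ (a + b) = p * (1 + X) ^ a * (q * (1 + X) ^ b) by ring]
  exact coeff_mul_nonneg ha hb j

theorem prod {ι : Type*} (s : Finset ι) {f : ι → ℝ[X]}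
    (hf : ∀ i ∈ s, HasNonnegCoeffsMulOneAddXPow (f i)) :
    HasNonnegCoeffsMulOneAddXPow (∏ i ∈ s, f i) :=
  Finset.prod_induction _ _ (fun _ _ => mul) one hf

theorem quadratic {c : ℝ} (hc : c < 1) :
    HasNonnegCoeffsMulOneAddXPow (X ^ 2 - C (2 * c) * X + 1) := by
  obtain ⟨k, hk⟩ := exists_nat_ge (2 / (1 - c))
  have hk' : 2 ≤ ((k : ℝ) + 2) * (1 - c) := by
    rw [div_le_iff₀ (by linarith)] at hk
    nlinarith
  refine ⟨k, fun j => ?_⟩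
  have hexpand : (X ^ 2 - C (2 * c) * X + 1) * (1 + X) ^ k
      = (1 + X) ^ (k + 2) - C (2 * (1 + c)) * (X * (1 + X) ^ k) := by
    simp only [map_mul, map_add, map_one, map_ofNat]
    ring
  rw [hexpand, coeff_sub, coeff_C_mul]
  rcases j with _ | m
  · simp [coeff_one_add_X_pow]
  · rw [coeff_X_mul, coeff_one_add_X_pow, coeff_one_add_X_pow]
    linarith [Nat.two_mul_choose_le_choose_add_two hk' m]

theorem exists_dvd_of_roots_norm_eq_one {f : ℝ[X]} (hf : f.natDegree ≠ 0)
    (hroots : ∀ z : ℂ, aeval z f = 0 → ‖z‖ = 1 ∧ z ≠ 1) :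
    ∃ q : ℝ[X], q ∣ f ∧ q.Monic ∧ q.natDegree ≠ 0 ∧ HasNonnegCoeffsMulOneAddXPow q := by
  obtain ⟨z, hz⟩ :=
    IsAlgClosed.exists_aeval_eq_zero ℂ f fun h => hf (natDegree_eq_of_degree_eq_some h)
  obtain ⟨hnorm, hz1⟩ := hroots z hz
  by_cases him : z.im = 0
  · have hre : z = (z.re : ℂ) := Complex.ext rfl (by simp [him])
    have hre1 : z.re = -1 := by
      rw [hre, norm_real, Real.norm_eq_abs] at hnorm
      rcases abs_eq (zero_le_one' ℝ) |>.mp hnorm with h | h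
      · exact absurd (by rw [hre, h, ofReal_one]) hz1
      · exact h
    refine ⟨X + 1, ?_, monic_X_add_C 1, by rw [← C_1, natDegree_X_add_C]; exact one_ne_zero,
      by simpa [add_comm] using one_add_X_pow 1⟩
    have hroot : f.IsRoot (-1) := by
      rw [hre, hre1, ← coe_algebraMap, aeval_algebraMap_apply_eq_algebraMap_eval] at hz
      exact (FaithfulSMul.algebraMap_eq_zero_iff ℝ ℂ).mp hz
    simpa using dvd_iff_isRoot.mpr hroot
  · have hre : z.re < 1 := by
      have him_sq := sq_norm_sub_sq_re z
      rw [hnorm] at him_sq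
      nlinarith [sq_pos_of_ne_zero him]
    have hdvd := quadratic_dvd_of_aeval_eq_zero_im_ne_zero f hz him
    rw [hnorm, one_pow, C_1] at hdvd
    have hdeg : (X ^ 2 - C (2 * z.re) * X + 1 : ℝ[X]).natDegree = 2 := by compute_degree!
    exact ⟨_, hdvd, by monicity!, by omega, quadratic hre⟩

theorem of_monic_of_roots_norm_eq_one {f : ℝ[X]} (hf : f.Monic)
    (hroots : ∀ z : ℂ, aeval z f = 0 → ‖z‖ = 1 ∧ z ≠ 1) : HasNonnegCoeffsMulOneAddXPow f := by
  induction hd : f.natDegree using Nat.strong_induction_on generalizing f with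
  | _ d ih =>
  rcases eq_or_ne d 0 with rfl | hd0
  · rw [hf.natDegree_eq_zero.mp hd]
    exact one
  obtain ⟨q, ⟨g, rfl⟩, hq, hq0, hPq⟩ := exists_dvd_of_roots_norm_eq_one (hd ▸ hd0) hroots
  have hg : g.Monic := hq.of_mul_monic_left hf
  refine hPq.mul (ih g.natDegree ?_ hg (fun z hz => hroots z (by simp [hz])) rfl)
  rw [← hd, hq.natDegree_mul hg]
  omega

theorem cyclotomic {n : ℕ} (hn : 2 ≤ n) : HasNonnegCoeffsMulOneAddXPow (cyclotomic n ℝ) := by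
  refine of_monic_of_roots_norm_eq_one (cyclotomic.monic n ℝ) fun z hz => ?_
  have : NeZero n := ⟨by omega⟩
  have hprim : IsPrimitiveRoot z n := by
    rwa [← isRoot_cyclotomic_iff, IsRoot, ← map_cyclotomic n (algebraMap ℝ ℂ), eval_map,
      ← aeval_def]
  exact ⟨hprim.norm'_eq_one (by omega), hprim.ne_one (by omega)⟩

end HasNonnegCoeffsMulOneAddXPow

/-- **Corollary 4.7 (Pólya's theorem applied to cyclotomic products).** For a finite
product `f` of cyclotomic polynomials `Φ_{n_i}` with all `n_i ≥ 2`, there exists a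
natural number `k` such that `f(x)·(1 + x)^k` has only nonnegative coefficients. -/
theorem stmt_18 (r : ℕ) (nn : Fin r → ℕ) (h : ∀ i, 2 ≤ nn i) :
    ∃ k : ℕ, ∀ j, 0 ≤ (((∏ i, cyclotomic (nn i) ℝ) * (1 + X) ^ k).coeff j) :=
  HasNonnegCoeffsMulOneAddXPow.prod _ fun i _ => HasNonnegCoeffsMulOneAddXPow.cyclotomic (h i)
end
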